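/- arXiv:1711.09610 — 3 statements merged into one kernel-verified Lean document; each statement's English description precedes it below -/
import Mathlib

section
/- Let G be a totally disconnected locally compact group, α a continuous endomorphism of G, and U a compact open subgroup of G that is tidy for α. Then U₊₊ ∩ U₋₋ ⊆ U₊ ∩ U₋; in particular U₊₊ ∩ U₋₋ ⊆ U. -/
open Pointwise Subgroup Filter

variable {G : Type*}

/-- The `n`-fold iterate of an endomorphism `α : G →* G`, as a monoid homomorphism. -/
def iterHom [Group G] (α : G →* G) : ℕ → G →* G
  | 0 => MonoidHom.id G
  | n + 1 => α.comp (iterHom α n)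

/-- The descending sequence `U_0 = U`, `U_{n+1} = U ⊓ α(U_n)`. -/
def seqU [Group G] (α : G →* G) (U : Subgroup G) : ℕ → Subgroup G
  | 0 => U
  | n + 1 => U ⊓ Subgroup.map α (seqU α U n)

/-- `U₊ = ⋂ₙ Uₙ`. -/
def Uplus [Group G] (α : G →* G) (U : Subgroup G) : Subgroup G := ⨅ n, seqU α U n

/-- `U₋ = ⋂ₙ α^{-n}(U)`. -/
def Uminus [Group G] (α : G →* G) (U : Subgroup G) : Subgroup G :=
  ⨅ n, Subgroup.comap (iterHom α n) U

/-- `U₊₊ = ⋃ₙ αⁿ(U₊)` as a subset of `G`. -/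
def Upp [Group G] (α : G →* G) (U : Subgroup G) : Set G :=
  ⋃ n, iterHom α n '' (Uplus α U : Set G)

/-- `U₋₋ = ⋃ₙ α^{-n}(U₋)` as a subset of `G`. -/
def Umm [Group G] (α : G →* G) (U : Subgroup G) : Set G :=
  ⋃ n, iterHom α n ⁻¹' (Uminus α U : Set G)

/-- `U₋ₙ = ⋂_{k=0}^{n} α^{-k}(U)`. -/
def Uneg [Group G] (α : G →* G) (U : Subgroup G) (n : ℕ) : Subgroup G :=
  ⨅ k ∈ Finset.range (n + 1), Subgroup.comap (iterHom α k) U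

/-- `U` is tidy above for `α` if `U = U₊U₋`. -/
def TidyAbove [Group G] (α : G →* G) (U : Subgroup G) : Prop :=
  (U : Set G) = (Uplus α U : Set G) * (Uminus α U : Set G)

/-- `U` is tidy below for `α` if `U₋₋` is closed. -/
def TidyBelow [Group G] [TopologicalSpace G] (α : G →* G) (U : Subgroup G) : Prop :=
  IsClosed (Umm α U)

/-- `U` is tidy for `α` if it is tidy above and tidy below for `α`. -/
def Tidy [Group G] [TopologicalSpace G] (α : G →* G) (U : Subgroup G) : Prop :=
  TidyAbove α U ∧ TidyBelow α U

/-- The scale of `α`: the minimum of `[α(V) : α(V) ∩ V]` over compact open subgroups `V`. -/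
noncomputable def scale [Group G] [TopologicalSpace G] (α : G →* G) : ℕ :=
  sInf {n : ℕ | ∃ V : Subgroup G, IsCompact (V : Set G) ∧ IsOpen (V : Set G) ∧
    n = Subgroup.relIndex V (Subgroup.map α V)}


section MyAux

variable [Group G] (α : G →* G) (U : Subgroup G)

lemma my_iterHom_succ (n : ℕ) (x : G) : iterHom α (n+1) x = α (iterHom α n x) := rfl

lemma my_iterHom_succ' (n : ℕ) (x : G) : iterHom α (n+1) x = iterHom α n (α x) := by
  induction n with
  | zero => rfl
  | succ n ih =>
    show α (iterHom α (n+1) x) = α (iterHom α n (α x))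
    rw [ih]

lemma my_mem_uminus (x : G) : x ∈ Uminus α U ↔ ∀ n, iterHom α n x ∈ U := by
  simp [Uminus, Subgroup.mem_iInf, Subgroup.mem_comap]

lemma my_uminus_le : Uminus α U ≤ U := fun x hx => (my_mem_uminus α U x).1 hx 0

lemma my_map_uminus {x : G} (hx : x ∈ Uminus α U) : α x ∈ Uminus α U := by
  rw [my_mem_uminus] at hx ⊢
  intro n
  rw [← my_iterHom_succ']
  exact hx (n+1)

lemma my_seqU_le (n : ℕ) : seqU α U n ≤ U := by
  cases n with
  | zero => exact le_rfl
  | succ n => exact inf_le_left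

lemma my_seqU_succ_le (n : ℕ) : seqU α U (n+1) ≤ seqU α U n := by
  induction n with
  | zero => exact inf_le_left
  | succ n ih => exact inf_le_inf le_rfl (Subgroup.map_mono ih)

lemma my_seqU_antitone : Antitone (seqU α U) :=
  antitone_nat_of_succ_le (my_seqU_succ_le α U)

lemma my_uplus_le (n : ℕ) : Uplus α U ≤ seqU α U n := iInf_le _ n

lemma my_uplus_le_U : Uplus α U ≤ U := my_uplus_le α U 0

lemma my_coe_uplus : (Uplus α U : Set G) = ⋂ n, (seqU α U n : Set G) := by
  simp [Uplus, Subgroup.coe_iInf]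

lemma my_coe_uminus : (Uminus α U : Set G) = ⋂ n, (iterHom α n) ⁻¹' (U : Set G) := by
  simp [Uminus, Subgroup.coe_iInf, Subgroup.coe_comap]

end MyAux

section MyTop
set_option linter.unusedSectionVars false

variable [Group G] [TopologicalSpace G] [IsTopologicalGroup G] (α : G →* G) (U : Subgroup G)

lemma my_t2 [TotallyDisconnectedSpace G] : T2Space G := by
  refine IsTopologicalGroup.t2Space_iff_one_closed.mpr (isClosed_of_closure_subset ?_)
  have h2 := (isPreconnected_singleton (x := (1:G))).closure.subset_connectedComponent
    (subset_closure rfl)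
  rwa [connectedComponent_eq_singleton] at h2

lemma my_iterHom_continuous (hα : Continuous α) (n : ℕ) : Continuous (iterHom α n) := by
  induction n with
  | zero => exact continuous_id
  | succ n ih => exact hα.comp ih

lemma my_seqU_isCompact [T2Space G] (hα : Continuous α) (hUc : IsCompact (U : Set G)) (n : ℕ) :
    IsCompact ((seqU α U n : Subgroup G) : Set G) ∧ IsClosed ((seqU α U n : Subgroup G) : Set G) := by
  induction n with
  | zero => exact ⟨hUc, hUc.isClosed⟩
  | succ n ih =>
    have himage : IsCompact (α '' (seqU α U n : Set G)) := ih.1.image hα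
    have hcoe : ((seqU α U (n+1) : Subgroup G) : Set G)
        = (U : Set G) ∩ α '' (seqU α U n : Set G) := by
      show ((U ⊓ Subgroup.map α (seqU α U n) : Subgroup G) : Set G) = _
      rw [Subgroup.coe_inf, Subgroup.coe_map]
    rw [hcoe]
    exact ⟨hUc.inter_right himage.isClosed, hUc.isClosed.inter himage.isClosed⟩

lemma my_image_iInter [T2Space G] (hα : Continuous α) {K : ℕ → Set G}
    (hcomp : ∀ n, IsCompact (K n)) (hcl : ∀ n, IsClosed (K n)) (hanti : Antitone K) :
    ⋂ n, α '' K n = α '' ⋂ n, K n := by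
  apply Set.Subset.antisymm
  · intro x hx
    simp only [Set.mem_iInter] at hx
    set L : ℕ → Set G := fun n => K n ∩ α ⁻¹' {x} with hL
    have hne : ∀ n, (L n).Nonempty := by
      intro n
      obtain ⟨y, hy, hyx⟩ := hx n
      exact ⟨y, hy, by simp [hyx]⟩
    have hLc : ∀ n, IsCompact (L n) :=
      fun n => (hcomp n).inter_right ((isClosed_singleton).preimage hα)
    have hLcl : ∀ n, IsClosed (L n) :=
      fun n => (hcl n).inter ((isClosed_singleton).preimage hα)
    have hdir : Directed (· ⊇ ·) L := fun m n =>
      ⟨max m n, Set.inter_subset_inter_left _ (hanti (le_max_left m n)),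
        Set.inter_subset_inter_left _ (hanti (le_max_right m n))⟩
    obtain ⟨y, hy⟩ :=
      IsCompact.nonempty_iInter_of_directed_nonempty_isCompact_isClosed L hdir hne hLc hLcl
    simp only [Set.mem_iInter, hL, Set.mem_inter_iff, Set.mem_preimage, Set.mem_singleton_iff] at hy
    exact ⟨y, Set.mem_iInter.mpr (fun n => (hy n).1), (hy 0).2⟩
  · intro x hx
    obtain ⟨y, hy, rfl⟩ := hx
    simp only [Set.mem_iInter] at hy ⊢
    exact fun n => ⟨y, hy n, rfl⟩

/-- Fact A: `U₊ = U ∩ α(U₊)`. -/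
lemma my_uplus_eq [T2Space G] (hα : Continuous α) (hUc : IsCompact (U : Set G)) :
    (Uplus α U : Set G) = (U : Set G) ∩ α '' (Uplus α U : Set G) := by
  have h1 : (Uplus α U : Set G) = ⋂ n, (seqU α U n : Set G) := my_coe_uplus α U
  have hsplit : (⋂ n, (seqU α U n : Set G))
      = (U : Set G) ∩ ⋂ n, (seqU α U (n+1) : Set G) := by
    apply Set.Subset.antisymm
    · intro x hx
      simp only [Set.mem_iInter] at hx
      exact ⟨hx 0, Set.mem_iInter.mpr fun n => hx (n+1)⟩
    · rintro x ⟨hx0, hx⟩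
      simp only [Set.mem_iInter] at hx ⊢
      intro n
      cases n with
      | zero => exact hx0
      | succ n => exact hx n
  have hcoe : ∀ n, ((seqU α U (n+1) : Subgroup G) : Set G)
      = (U : Set G) ∩ α '' (seqU α U n : Set G) := by
    intro n
    show ((U ⊓ Subgroup.map α (seqU α U n) : Subgroup G) : Set G) = _
    rw [Subgroup.coe_inf, Subgroup.coe_map]
  have h2 : (U : Set G) ∩ ⋂ n, (seqU α U (n+1) : Set G)
      = (U : Set G) ∩ ⋂ n, α '' (seqU α U n : Set G) := by
    ext x
    simp only [Set.mem_inter_iff, Set.mem_iInter]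
    constructor
    · rintro ⟨hxU, hx⟩
      refine ⟨hxU, fun n => ?_⟩
      have h := hx n
      rw [hcoe n] at h
      exact h.2
    · rintro ⟨hxU, hx⟩
      refine ⟨hxU, fun n => ?_⟩
      rw [hcoe n]
      exact ⟨hxU, hx n⟩
  have h3 : ⋂ n, α '' (seqU α U n : Set G) = α '' ⋂ n, (seqU α U n : Set G) :=
    my_image_iInter α hα (fun n => (my_seqU_isCompact α U hα hUc n).1)
      (fun n => (my_seqU_isCompact α U hα hUc n).2)
      (fun m n h => my_seqU_antitone α U h)
  calc (Uplus α U : Set G) = ⋂ n, (seqU α U n : Set G) := h1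
    _ = (U : Set G) ∩ ⋂ n, (seqU α U (n+1) : Set G) := hsplit
    _ = (U : Set G) ∩ ⋂ n, α '' (seqU α U n : Set G) := h2
    _ = (U : Set G) ∩ α '' ⋂ n, (seqU α U n : Set G) := by rw [h3]
    _ = (U : Set G) ∩ α '' (Uplus α U : Set G) := by rw [← h1]

lemma my_uplus_isClosed [T2Space G] (hα : Continuous α) (hUc : IsCompact (U : Set G)) :
    IsClosed (Uplus α U : Set G) := by
  rw [my_coe_uplus]
  exact isClosed_iInter fun n => (my_seqU_isCompact α U hα hUc n).2

lemma my_uplus_isCompact [T2Space G] (hα : Continuous α) (hUc : IsCompact (U : Set G)) :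
    IsCompact (Uplus α U : Set G) :=
  hUc.of_isClosed_subset (my_uplus_isClosed α U hα hUc) (my_uplus_le_U α U)

lemma my_uminus_isClosed [T2Space G] (hα : Continuous α) (hUc : IsCompact (U : Set G)) :
    IsClosed (Uminus α U : Set G) := by
  rw [my_coe_uminus]
  exact isClosed_iInter fun n => hUc.isClosed.preimage (my_iterHom_continuous α hα n)

end MyTop

section MyAux2

variable [Group G] (α : G →* G) (U : Subgroup G)

lemma my_mem_umm (m : ℕ) {x : G} (hx : iterHom α m x ∈ Uminus α U) : x ∈ Umm α U :=
  Set.mem_iUnion.mpr ⟨m, hx⟩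

lemma my_umm_elim {x : G} (hx : x ∈ Umm α U) : ∃ m, iterHom α m x ∈ Uminus α U := by
  simpa [Umm] using hx

lemma my_upp_elim {x : G} (hx : x ∈ Upp α U) :
    ∃ n, x ∈ iterHom α n '' (Uplus α U : Set G) := by
  simpa [Upp] using hx

end MyAux2

/-- For `U` tidy for `α`: `U₊₊ ∩ U₋₋ ⊆ U₊ ∩ U₋`; in particular `U₊₊ ∩ U₋₋ ⊆ U`. -/
theorem upp_inter_umm_subset [Group G] [TopologicalSpace G] [IsTopologicalGroup G]
    [TotallyDisconnectedSpace G] [LocallyCompactSpace G]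
    (α : G →* G) (hα : Continuous α)
    (U : Subgroup G) (hUc : IsCompact (U : Set G)) (hUo : IsOpen (U : Set G))
    (hU : Tidy α U) :
    Upp α U ∩ Umm α U ⊆ ((Uplus α U ⊓ Uminus α U : Subgroup G) : Set G) ∧
    Upp α U ∩ Umm α U ⊆ (U : Set G) := by
  haveI hT2 : T2Space G := my_t2
  obtain ⟨hTA, hTB⟩ := hU
  have hfactA := my_uplus_eq α U hα hUc
  have hUpc : IsCompact (Uplus α U : Set G) := my_uplus_isCompact α U hα hUc
  have hUpcl : IsClosed (Uplus α U : Set G) := my_uplus_isClosed α U hα hUc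
  have hUmcl : IsClosed (Uminus α U : Set G) := my_uminus_isClosed α U hα hUc
  -- the chain `A n = U₊ ∩ α^{-n}(U₋)`
  set A : ℕ → Subgroup G := fun n => Uplus α U ⊓ (Uminus α U).comap (iterHom α n) with hA
  have hAmem : ∀ (n : ℕ) (x : G), x ∈ A n ↔ x ∈ Uplus α U ∧ iterHom α n x ∈ Uminus α U := by
    intro n x
    simp [hA, Subgroup.mem_inf, Subgroup.mem_comap]
  have hAsucc : ∀ n, A n ≤ A (n+1) := by
    intro n x hx
    rw [hAmem] at hx ⊢
    exact ⟨hx.1, by rw [my_iterHom_succ]; exact my_map_uminus α U hx.2⟩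
  have hAmono : Monotone A := monotone_nat_of_le_succ hAsucc
  have hAcl : ∀ n, IsClosed ((A n : Subgroup G) : Set G) := by
    intro n
    have hcoe : ((A n : Subgroup G) : Set G)
        = (Uplus α U : Set G) ∩ (iterHom α n) ⁻¹' (Uminus α U : Set G) := by
      rw [hA]
      rw [Subgroup.coe_inf, Subgroup.coe_comap]
    rw [hcoe]
    exact hUpcl.inter (hUmcl.preimage (my_iterHom_continuous α hα n))
  -- `B = U₊ ∩ U₋₋`
  set B : Set G := (Uplus α U : Set G) ∩ Umm α U with hBdef
  have hBcover : B = ⋃ n, ((A n : Subgroup G) : Set G) := by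
    calc B = ⋃ n, ((Uplus α U : Set G) ∩ iterHom α n ⁻¹' (Uminus α U : Set G)) := by
            rw [hBdef]; exact Set.inter_iUnion _ _
      _ = ⋃ n, ((A n : Subgroup G) : Set G) := Set.iUnion_congr fun n => by
            ext x
            constructor
            · rintro ⟨h1, h2⟩
              exact (hAmem n x).mpr ⟨h1, h2⟩
            · intro h
              have h' := (hAmem n x).mp h
              exact ⟨h'.1, h'.2⟩
  have hBc : IsCompact B := hUpc.inter_right hTB
  -- Baire category: the chain is eventually all of `B`
  obtain ⟨N, hN⟩ : ∃ N, B ⊆ ((A N : Subgroup G) : Set G) := by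
    rcases B.eq_empty_or_nonempty with h | h
    · exact ⟨0, by simp [h]⟩
    haveI : Nonempty ↥B := h.to_subtype
    haveI : CompactSpace ↥B := isCompact_iff_compactSpace.mp hBc
    obtain ⟨N0, b0, hb0⟩ := nonempty_interior_of_iUnion_of_closed (X := ↥B)
      (f := fun n => Subtype.val ⁻¹' ((A n : Subgroup G) : Set G))
      (fun n => (hAcl n).preimage continuous_subtype_val)
      (by
        ext x
        obtain ⟨g, hg⟩ := x
        simp only [Set.mem_iUnion, Set.mem_univ, iff_true, Set.mem_preimage]
        rw [hBcover] at hg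
        simpa using hg)
    obtain ⟨b, hbB⟩ := b0
    have hmem : (Subtype.val ⁻¹' ((A N0 : Subgroup G) : Set G)) ∈ nhds (⟨b, hbB⟩ : ↥B) :=
      mem_interior_iff_mem_nhds.mp hb0
    rw [nhds_subtype_eq_comap] at hmem
    obtain ⟨O, hO, hOsub⟩ := Filter.mem_comap.mp hmem
    obtain ⟨O', hO'sub, hO'open, hbO'⟩ := mem_nhds_iff.mp hO
    have hkey : ∀ g, g ∈ B → g ∈ O' → g ∈ A N0 := by
      intro g hgB hgO
      have : (⟨g, hgB⟩ : ↥B) ∈ Subtype.val ⁻¹' O := hO'sub hgO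
      exact hOsub this
    -- cover `B` by finitely many translates of a neighbourhood of 1
    have hVnhds : ∀ x ∈ B, ((fun g => b * x⁻¹ * g) ⁻¹' O') ∈ nhds x := by
      intro x hx
      have hopen : IsOpen ((fun g => b * x⁻¹ * g) ⁻¹' O') :=
        hO'open.preimage (continuous_mul_left (b * x⁻¹))
      have hmemx : x ∈ (fun g => b * x⁻¹ * g) ⁻¹' O' := by
        show b * x⁻¹ * x ∈ O'
        simpa using hbO'
      exact hopen.mem_nhds hmemx
    obtain ⟨t, htB, htcov⟩ := hBc.elim_nhds_subcover _ hVnhds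
    have hidx : ∀ x, x ∈ B → ∃ n, x ∈ A n := by
      intro x hx
      rw [hBcover] at hx
      simpa using hx
    have hBmem : ∀ (n : ℕ) (x : G), x ∈ A n → x ∈ B := by
      intro n x hx
      rw [hBcover]
      exact Set.mem_iUnion.mpr ⟨n, hx⟩
    have hfinmax : ∀ s : Finset G, (∀ x ∈ s, ∃ n, x ∈ A n) → ∃ M, ∀ x ∈ s, x ∈ A M := by
      classical
      intro s
      induction s using Finset.induction_on with
      | empty => exact fun _ => ⟨0, by simp⟩
      | @insert a s ha ih =>
        intro hs
        obtain ⟨M1, hM1⟩ := ih (fun x hx => hs x (Finset.mem_insert_of_mem hx))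
        obtain ⟨n1, hn1⟩ := hs _ (Finset.mem_insert_self _ _)
        refine ⟨max M1 n1, fun x hx => ?_⟩
        rcases Finset.mem_insert.mp hx with rfl | hx
        · exact hAmono (le_max_right _ _) hn1
        · exact hAmono (le_max_left _ _) (hM1 x hx)
    obtain ⟨M0, hM0⟩ := hfinmax t (fun x hx => hidx x (htB x hx))
    obtain ⟨nb, hnb⟩ := hidx b hbB
    set M : ℕ := max (max M0 nb) N0 with hM
    refine ⟨M, ?_⟩
    intro y hyB
    obtain ⟨x, hxt, hyx⟩ := Set.mem_iUnion₂.mp (htcov hyB)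
    have hz : b * x⁻¹ * y ∈ O' := hyx
    obtain ⟨ny, hny⟩ := hidx y hyB
    set K : ℕ := max M ny with hK
    have hxK : x ∈ A K := hAmono (le_trans (le_trans (le_max_left _ _) (le_max_left _ _)) (le_max_left _ _)) (hM0 x hxt)
    have hbK : b ∈ A K := hAmono (le_trans (le_trans (le_max_right _ _) (le_max_left _ _)) (le_max_left _ _)) hnb
    have hyK : y ∈ A K := hAmono (le_max_right _ _) hny
    have hzB : b * x⁻¹ * y ∈ B := hBmem K _ (mul_mem (mul_mem hbK (inv_mem hxK)) hyK)
    have hzA : b * x⁻¹ * y ∈ A N0 := hkey _ hzB hz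
    have hyeq : y = x * b⁻¹ * (b * x⁻¹ * y) := by group
    show y ∈ A M
    rw [hyeq]
    refine mul_mem (mul_mem ?_ (inv_mem ?_)) (hAmono (le_max_right _ _) hzA)
    · exact hAmono (le_trans (le_max_left _ _) (le_max_left _ _)) (hM0 x hxt)
    · exact hAmono (le_trans (le_max_right _ _) (le_max_left _ _)) hnb
  have hstep : ∀ n, A (n+2) ≤ A (n+1) → A (n+1) ≤ A n := by
    intro n h x hx
    rw [hAmem] at hx
    obtain ⟨hxp, hxm⟩ := hx
    have hx' : x ∈ (U : Set G) ∩ α '' (Uplus α U : Set G) := by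
      rw [← hfactA]; exact hxp
    obtain ⟨-, a, ha, rfl⟩ := hx'
    have ha2 : a ∈ A (n+2) := by
      rw [hAmem]
      exact ⟨ha, by rw [my_iterHom_succ']; exact hxm⟩
    have ha1 := h ha2
    rw [hAmem] at ha1
    rw [hAmem]
    exact ⟨hxp, by rw [← my_iterHom_succ']; exact ha1.2⟩
  have hchainN : A (N+1) ≤ A N := by
    intro x hx
    have hx' := (hAmem _ _).mp hx
    have hxB : x ∈ B := ⟨hx'.1, my_mem_umm α U (N+1) hx'.2⟩
    exact hN hxB
  have hPdown : ∀ k, A (N - k + 1) ≤ A (N - k) := by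
    intro k
    induction k with
    | zero => simpa using hchainN
    | succ k ih =>
      by_cases hk : N ≤ k
      · have heq : N - (k+1) = N - k := by omega
        rw [heq]; exact ih
      · apply hstep
        have h2 : N - (k+1) + 2 = N - k + 1 := by omega
        have h1 : N - (k+1) + 1 = N - k := by omega
        rw [h2, h1]; exact ih
  have hNle : ∀ k, A N ≤ A (N - k) := by
    intro k
    induction k with
    | zero => simp
    | succ k ih =>
      by_cases hk : N ≤ k
      · have heq : N - (k+1) = N - k := by omega
        rw [heq]; exact ih
      · refine le_trans ih ?_
        have h1 : N - k = N - (k+1) + 1 := by omega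
        rw [h1]
        exact hPdown (k+1)
  have hA0 : A N ≤ A 0 := by
    have := hNle N
    rwa [Nat.sub_self] at this
  have hB0 : ∀ x : G, x ∈ Uplus α U → x ∈ Umm α U → x ∈ Uplus α U ∧ x ∈ Uminus α U := by
    intro x h1 h2
    have hxB : x ∈ B := ⟨h1, h2⟩
    have h3 := (hAmem 0 x).mp (hA0 (hN hxB))
    exact h3
  -- main induction on the power of α on the plus side
  have hmain : ∀ (n : ℕ) (x : G), x ∈ iterHom α n '' (Uplus α U : Set G) → x ∈ Umm α U →
      x ∈ Uplus α U ∧ x ∈ Uminus α U := by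
    intro n
    induction n with
    | zero =>
      rintro x ⟨u, hu, rfl⟩ hxm
      exact hB0 u hu hxm
    | succ n ih =>
      rintro x ⟨u, hu, rfl⟩ hxm
      obtain ⟨m, hm⟩ := my_umm_elim α U hxm
      have hymm : iterHom α n u ∈ Umm α U := by
        refine my_mem_umm α U (m+1) ?_
        rw [my_iterHom_succ']
        exact hm
      obtain ⟨hyp, hym⟩ := ih (iterHom α n u) ⟨u, hu, rfl⟩ hymm
      have hxm' : iterHom α (n+1) u ∈ Uminus α U := by
        rw [my_iterHom_succ]
        exact my_map_uminus α U hym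
      have hxp : iterHom α (n+1) u ∈ Uplus α U := by
        have hmem2 : iterHom α (n+1) u ∈ (U : Set G) ∩ α '' (Uplus α U : Set G) :=
          ⟨my_uminus_le α U hxm', ⟨iterHom α n u, hyp, rfl⟩⟩
        rw [← hfactA] at hmem2
        exact hmem2
      exact ⟨hxp, hxm'⟩
  constructor
  · rintro x ⟨hx1, hx2⟩
    obtain ⟨n, hn⟩ := my_upp_elim α U hx1
    have h := hmain n x hn hx2
    exact Subgroup.mem_inf.mpr h
  · rintro x ⟨hx1, hx2⟩
    obtain ⟨n, hn⟩ := my_upp_elim α U hx1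
    exact my_uplus_le_U α U (hmain n x hn hx2).1
end

section
/- Let G be a totally disconnected locally compact group, α a continuous endomorphism of G, and U a compact open subgroup of G. If the set {α^{-i}(U) : i ∈ ℕ} of preimages is finite, then there exists N ∈ ℕ such that the compact open subgroup V = ⋂_{k=0}^{N} α^{-k}(U) satisfies V = U₋, α(V) ⊆ V, and V is tidy for α. -/
open Pointwise Subgroup Filter

variable {G : Type*}

lemma iterHom_succ_apply' [Group G] (α : G →* G) (n : ℕ) (x : G) :
    iterHom α (n + 1) x = iterHom α n (α x) := by
  induction n with
  | zero => rfl
  | succ n ih =>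
    show α (iterHom α (n + 1) x) = α (iterHom α n (α x))
    rw [ih]

lemma iterHom_continuous [Group G] [TopologicalSpace G] (α : G →* G)
    (hα : Continuous α) : ∀ n, Continuous (iterHom α n)
  | 0 => continuous_id
  | n + 1 => hα.comp (iterHom_continuous α hα n)

lemma mem_Uminus [Group G] (α : G →* G) (U : Subgroup G) (x : G) :
    x ∈ Uminus α U ↔ ∀ n, iterHom α n x ∈ U := by
  simp [Uminus, Subgroup.mem_iInf, Subgroup.mem_comap]

lemma mem_Uneg [Group G] (α : G →* G) (U : Subgroup G) (N : ℕ) (x : G) :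
    x ∈ Uneg α U N ↔ ∀ k ≤ N, iterHom α k x ∈ U := by
  simp [Uneg, Subgroup.mem_iInf, Subgroup.mem_comap, Nat.lt_succ_iff]

/-- If `{α^{-i}(U) : i ∈ ℕ}` is finite, then there is `N` such that
`V := ⋂_{k=0}^N α^{-k}(U)` satisfies `V = U₋`, `α(V) ≤ V`, and `V` is tidy for `α`. -/
theorem finite_preimages_tidy [Group G] [TopologicalSpace G] [IsTopologicalGroup G]
    [TotallyDisconnectedSpace G] [LocallyCompactSpace G]
    (α : G →* G) (hα : Continuous α)
    (U : Subgroup G) (hUc : IsCompact (U : Set G)) (hUo : IsOpen (U : Set G))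
    (hfin : (Set.range fun n : ℕ => Subgroup.comap (iterHom α n) U).Finite) :
    ∃ N : ℕ,
      Uneg α U N = Uminus α U ∧
      Subgroup.map α (Uneg α U N) ≤ Uneg α U N ∧
      Tidy α (Uneg α U N) := by
  classical
  set A : ℕ → Subgroup G := fun n => Subgroup.comap (iterHom α n) U with hA
  have hwit : ∀ a : hfin.toFinset, ∃ m, A m = (a : Subgroup G) := by
    intro a
    have h2 := a.2
    rw [Set.Finite.mem_toFinset] at h2
    exact h2
  choose f hf using hwit
  set N := hfin.toFinset.attach.sup f with hN
  have hNle : ∀ m, ∃ k ≤ N, A k = A m := by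
    intro m
    have hm : A m ∈ hfin.toFinset := by
      rw [Set.Finite.mem_toFinset]; exact ⟨m, rfl⟩
    exact ⟨f ⟨A m, hm⟩, Finset.le_sup (Finset.mem_attach _ _), hf ⟨A m, hm⟩⟩
  have hVeq : Uneg α U N = Uminus α U := by
    apply le_antisymm
    · intro x hx
      rw [mem_Uminus]
      intro m
      obtain ⟨k, hk, hAk⟩ := hNle m
      have hxk : x ∈ A k := (mem_Uneg α U N x).1 hx k hk
      rw [hAk] at hxk
      exact hxk
    · intro x hx
      rw [mem_Uneg]
      intro k _
      exact (mem_Uminus α U x).1 hx k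
  have hmap : Subgroup.map α (Uneg α U N) ≤ Uneg α U N := by
    rw [Subgroup.map_le_iff_le_comap]
    intro x hx
    have hx' : ∀ m, iterHom α m x ∈ U := (mem_Uminus α U x).1 (hVeq ▸ hx)
    show α x ∈ Uneg α U N
    rw [hVeq, mem_Uminus]
    intro m
    rw [← iterHom_succ_apply']
    exact hx' (m + 1)
  have hiter : ∀ n, ∀ x ∈ Uneg α U N, iterHom α n x ∈ Uneg α U N := by
    intro n
    induction n with
    | zero => intro x hx; exact hx
    | succ n ih =>
      intro x hx
      show α (iterHom α n x) ∈ Uneg α U N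
      exact hmap ⟨_, ih x hx, rfl⟩
  have hVm : Uminus α (Uneg α U N) = Uneg α U N := by
    apply le_antisymm
    · intro x hx
      exact (mem_Uminus _ _ x).1 hx 0
    · intro x hx
      rw [mem_Uminus]
      intro n
      exact hiter n x hx
  have hplus : Uplus α (Uneg α U N) ≤ Uneg α U N := by
    intro x hx
    exact Subgroup.mem_iInf.1 hx 0
  have hVopen : IsOpen ((Uneg α U N : Subgroup G) : Set G) := by
    have hco : ((Uneg α U N : Subgroup G) : Set G)
        = ⋂ k ∈ Finset.range (N + 1), (iterHom α k) ⁻¹' (U : Set G) := by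
      ext x
      simp [mem_Uneg α U N x, Nat.lt_succ_iff]
    rw [hco]
    exact isOpen_biInter_finset fun k _ => hUo.preimage (iterHom_continuous α hα k)
  refine ⟨N, hVeq, hmap, ?_, ?_⟩
  · -- TidyAbove
    rw [TidyAbove, hVm]
    apply Set.Subset.antisymm
    · intro x hx
      exact ⟨1, one_mem _, x, hx, one_mul x⟩
    · rintro x ⟨a, ha, b, hb, rfl⟩
      exact mul_mem (hplus ha) hb
  · -- TidyBelow
    rw [TidyBelow]
    have hUmm : Umm α (Uneg α U N)
        = ((⨆ n, Subgroup.comap (iterHom α n) (Uneg α U N) : Subgroup G) : Set G) := by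
      have hmono : Monotone fun n => Subgroup.comap (iterHom α n) (Uneg α U N) := by
        apply monotone_nat_of_le_succ
        intro n x hx
        show α (iterHom α n x) ∈ Uneg α U N
        exact hmap ⟨iterHom α n x, hx, rfl⟩
      rw [Subgroup.coe_iSup_of_directed hmono.directed_le]
      rw [Umm, hVm]
      rfl
    rw [hUmm]
    apply Subgroup.isClosed_of_isOpen
    apply Subgroup.isOpen_mono (le_iSup (fun n => Subgroup.comap (iterHom α n) (Uneg α U N)) 0)
    exact hVopen
end

section
/- Let G be a totally disconnected locally compact group, α a continuous endomorphism of G, and U a compact open subgroup of G that is tidy above for α. If the set {α^{-n}(U) : n ∈ ℕ} of preimages is finite, then α(U) ⊆ U and U ⊆ α⁻¹(U). -/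
open Pointwise Subgroup Filter

variable {G : Type*}

lemma seqU_succ_le [Group G] (α : G →* G) (U : Subgroup G) :
    ∀ n, seqU α U (n + 1) ≤ seqU α U n
  | 0 => inf_le_left
  | n + 1 => inf_le_inf_left U (Subgroup.map_mono (seqU_succ_le α U n))

/-- If `U` is tidy above for `α` and `{α^{-n}(U) : n ∈ ℕ}` is finite,
then `α(U) ⊆ U` and `U ⊆ α⁻¹(U)`. -/
theorem finite_preimages_stabilize [Group G] [TopologicalSpace G] [IsTopologicalGroup G]
    [TotallyDisconnectedSpace G] [LocallyCompactSpace G]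
    (α : G →* G) (hα : Continuous α)
    (U : Subgroup G) (hUc : IsCompact (U : Set G)) (hUo : IsOpen (U : Set G))
    (hU : TidyAbove α U)
    (hfin : (Set.range fun n : ℕ => Subgroup.comap (iterHom α n) U).Finite) :
    Subgroup.map α U ≤ U ∧ U ≤ Subgroup.comap α U := by
  haveI hT1 : T1Space G := ⟨fun x => by
    have h := isClosed_connectedComponent (x := x)
    rwa [connectedComponent_eq_singleton] at h⟩
  haveI hT2 : T2Space G := IsTopologicalGroup.t2Space_iff_one_closed.mpr isClosed_singleton
  have hUclosed : IsClosed (U : Set G) := U.isClosed_of_isOpen hUo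
  have hUplus_le : ∀ n, Uplus α U ≤ seqU α U n := fun n => iInf_le _ n
  have hseqc : ∀ n, IsCompact (seqU α U n : Set G) := by
    intro n
    induction n with
    | zero => exact hUc
    | succ n ih =>
      have h1 : (seqU α U (n + 1) : Set G) = (U : Set G) ∩ (⇑α '' (seqU α U n : Set G)) := by
        rw [show seqU α U (n + 1) = U ⊓ Subgroup.map α (seqU α U n) from rfl,
          Subgroup.coe_inf, Subgroup.coe_map]
      rw [h1]
      exact (ih.image hα).inter_left hUclosed
  -- every element of U₊ has a preimage in U₊
  have hL : ∀ a ∈ Uplus α U, ∃ x ∈ Uplus α U, α x = a := by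
    intro a ha
    set C : ℕ → Set G := fun n => (seqU α U n : Set G) ∩ α ⁻¹' {a} with hC
    have hCne : ∀ n, (C n).Nonempty := by
      intro n
      have ha' : a ∈ U ⊓ Subgroup.map α (seqU α U n) := hUplus_le (n + 1) ha
      obtain ⟨x, hx, hxa⟩ := Subgroup.mem_map.mp (Subgroup.mem_inf.mp ha').2
      exact ⟨x, hx, by simp [hxa]⟩
    have hCsub : ∀ n, C (n + 1) ⊆ C n := fun n =>
      Set.inter_subset_inter_left _ (SetLike.coe_subset_coe.mpr (seqU_succ_le α U n))
    have hCcl : ∀ n, IsClosed (C n) :=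
      fun n => (hseqc n).isClosed.inter (isClosed_singleton.preimage hα)
    obtain ⟨x, hx⟩ := IsCompact.nonempty_iInter_of_sequence_nonempty_isCompact_isClosed
      C hCsub hCne ((hseqc 0).inter_right (isClosed_singleton.preimage hα)) hCcl
    simp only [Set.mem_iInter, hC, Set.mem_inter_iff, Set.mem_preimage,
      Set.mem_singleton_iff, SetLike.mem_coe] at hx
    exact ⟨x, Subgroup.mem_iInf.mpr fun n => (hx n).1, (hx 0).2⟩
  -- the key claim
  have key : ∀ a ∈ Uplus α U, α a ∈ U := by
    intro a ha
    choose! F hF1 hF2 using hL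
    have hmem : ∀ j : ℕ, F^[j] a ∈ Uplus α U := by
      intro j
      induction j with
      | zero => simpa using ha
      | succ j ih => rw [Function.iterate_succ_apply']; exact hF1 _ ih
    set s : ℕ → G := fun j => F^[j] a with hs
    have hstep : ∀ j, α (s (j + 1)) = s j := by
      intro j
      rw [hs]
      simp only [Function.iterate_succ_apply']
      exact hF2 _ (hmem j)
    have hs0 : s 0 = a := rfl
    have hiter : ∀ k j, iterHom α k (s (j + k)) = s j := by
      intro k
      induction k with
      | zero => intro j; rfl
      | succ k ih =>
        intro j
        have h1 : iterHom α (k + 1) (s (j + (k + 1))) = α (iterHom α k (s (j + (k + 1)))) := rfl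
        have h2 : j + (k + 1) = (j + 1) + k := by omega
        rw [h1, h2, ih (j + 1), hstep j]
    have main : ∀ m n : ℕ, m < n →
        Subgroup.comap (iterHom α m) U = Subgroup.comap (iterHom α n) U → α a ∈ U := by
      intro m n hlt heq
      have hm : s (n - 1) ∈ Subgroup.comap (iterHom α m) U := by
        have h3 := hiter m (n - 1 - m)
        rw [show n - 1 - m + m = n - 1 from by omega] at h3
        rw [Subgroup.mem_comap, h3]
        exact hUplus_le 0 (hmem _)
      rw [heq, Subgroup.mem_comap] at hm
      obtain ⟨k, rfl⟩ : ∃ k, n = k + 1 := ⟨n - 1, by omega⟩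
      have h4 : iterHom α (k + 1) (s (k + 1 - 1)) = α (iterHom α k (s k)) := rfl
      have h5 := hiter k 0
      rw [Nat.zero_add] at h5
      rw [h4, h5, hs0] at hm
      exact hm
    have hninj : ¬ Function.Injective (fun n : ℕ => Subgroup.comap (iterHom α n) U) :=
      fun h => (Set.infinite_range_of_injective h) hfin
    obtain ⟨m, n, heq, hne⟩ := Function.not_injective_iff.mp hninj
    rcases hne.lt_or_gt with h | h
    · exact main m n h heq
    · exact main n m h heq.symm
  have hmain : Subgroup.map α U ≤ U := by
    rintro _ ⟨u, hu, rfl⟩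
    have hu' : u ∈ (Uplus α U : Set G) * (Uminus α U : Set G) := by
      rw [← hU]; exact hu
    obtain ⟨a, ha, b, hb, rfl⟩ := hu'
    have hb1 : α b ∈ U := iInf_le (fun n => Subgroup.comap (iterHom α n) U) 1 hb
    rw [map_mul]
    exact U.mul_mem (key a ha) hb1
  exact ⟨hmain, Subgroup.map_le_iff_le_comap.mp hmain⟩
end
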